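/- Let q be a prime power and F_q a finite field with q elements, and let id be the identity permutation of {1,2,3}. Then Σ_{t ∈ (F_q^×)^3} |Fix_3(id,t)| = (q^3−1)(q^3−q)(q^3−q^2) + 6·P_3·(q−1)^3 + 12·P_7·(q−1)^3, where P_3 = 1 if 3 | (q−1) and 0 otherwise, and P_7 = 1 if 7 | (q−1) and 0 otherwise. Here Fix_3(id,t) = {A ∈ GL_3(F_q) : t_i A_{ij} = A_{ij} t_j^2 for all i, j}. -/

import Mathlib

open Matrix

/-- The set of fixed points of `(σ, t)` in `GL n F` under the action
`(σ,t)·A = D_t⁻¹ P_σ⁻¹ A P_σ D_t²`, i.e. the invertible matrices `A` with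
`t_i A_{ij} = A_{σ(i)σ(j)} t_j²` for all `i, j`. -/
def fixSet (F : Type*) [Field F] (n : ℕ) (σ : Equiv.Perm (Fin n)) (t : Fin n → Fˣ) :
    Set (GL (Fin n) F) :=
  {A | ∀ i j, (t i : F) * (A : Matrix (Fin n) (Fin n) F) i j
        = (A : Matrix (Fin n) (Fin n) F) (σ i) (σ j) * (t j : F) ^ 2}

/-!
For `σ = 1`, `A` is fixed by `t` iff `A i j = 0` whenever `t i ≠ t j ^ 2`, so by expanding the
determinant `Fix(1, t)` is nonempty only if `t ∘ π = t ^ 2` for some permutation `π`. For `n = 3`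
such a `t` is either `1`, fixing all of `GL₃`, or injective; then `π` is unique and `Fix(1, t)`
consists of the monomial matrices of shape `π`, of which there are `(q - 1)³`. Double counting
turns the sum over `t ≠ 1` into a sum over `π` of the number of nontrivial solutions of
`t ∘ π = t ^ 2`. This number is invariant under conjugation of `π`; it is `0` for `π = 1`, and for
a transposition (resp. a `3`-cycle) a solution is determined by `a = t 0`, which satisfies
`a ^ 4 = a` (resp. `a ^ 8 = a`), i.e. has order `3` (resp. `7`).
-/

open Finset

lemma pow_eq_one_of_pow_succ_eq_self {G : Type*} [RightCancelMonoid G] {a : G} {m : ℕ}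
    (h : a ^ (m + 1) = a) : a ^ m = 1 :=
  mul_eq_right.mp (by rw [← pow_succ, h])

lemma eq_one_of_sq_eq_self {G : Type*} [RightCancelMonoid G] {a : G} (h : a ^ 2 = a) : a = 1 := by
  simpa using pow_eq_one_of_pow_succ_eq_self (m := 1) h

lemma card_orderOf_eq_prime {G : Type*} [Group G] [IsCyclic G] [Fintype G] [DecidableEq G]
    (p : ℕ) [Fact p.Prime] :
    #{a : G | orderOf a = p} = if p ∣ Fintype.card G then p - 1 else 0 := by
  split_ifs with h
  · rw [IsCyclic.card_orderOf_eq_totient h, Nat.totient_prime Fact.out]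
  · exact card_eq_zero.mpr <| filter_eq_empty_iff.mpr fun a _ ha => h (ha ▸ orderOf_dvd_card)

/-- If `t i = t j` with `i ≠ j`, then `π` maps `i` or `j` into `{i, j}`, so that entry is its own
square, hence `1`. Any other entry `t k` is then its own square as well, or the square of `t i`
or `t j`. -/
lemma injective_of_apply_perm_eq_sq {G : Type*} [RightCancelMonoid G] {t : Fin 3 → G}
    {π : Equiv.Perm (Fin 3)} (h : ∀ j, t (π j) = t j ^ 2) (ht : t ≠ 1) :
    Function.Injective t := by
  intro i j hij
  by_contra hne
  have fixed (x : Fin 3) (hx : t (π x) = t x) : t x = 1 :=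
    eq_one_of_sq_eq_self ((h x).symm.trans hx)
  have hi : t i = 1 := by
    rcases (by decide : ∀ π : Equiv.Perm (Fin 3), ∀ i j : Fin 3, i ≠ j →
        π i = i ∨ π i = j ∨ π j = i ∨ π j = j) π i j hne with h' | h' | h' | h'
    · exact fixed i (by rw [h'])
    · exact fixed i (by rw [h', hij])
    · exact hij ▸ fixed j (by rw [h', hij])
    · exact hij ▸ fixed j (by rw [h'])
  apply ht
  funext k
  rcases (by decide : ∀ π : Equiv.Perm (Fin 3), ∀ i j k : Fin 3, i ≠ j →
      k = i ∨ k = j ∨ π k = k ∨ π.symm k = i ∨ π.symm k = j) π i j k hne with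
    h' | h' | h' | h' | h'
  · rw [h', hi]; rfl
  · rw [h', ← hij, hi]; rfl
  · exact fixed k (by rw [h'])
  · rw [← π.apply_symm_apply k, h, h', hi, one_pow]; rfl
  · rw [← π.apply_symm_apply k, h, h', ← hij, hi, one_pow]; rfl

def sqPermSolutions (G : Type*) [Monoid G] [Fintype G] [DecidableEq G] {n : ℕ}
    (π : Equiv.Perm (Fin n)) : Finset (Fin n → G) :=
  {t | t ≠ 1 ∧ ∀ j, t (π j) = t j ^ 2}

section SqPermSolutions

variable {G : Type*} [Fintype G] [DecidableEq G] {n : ℕ}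

lemma mem_sqPermSolutions [Monoid G] {π : Equiv.Perm (Fin n)} {t : Fin n → G} :
    t ∈ sqPermSolutions G π ↔ t ≠ 1 ∧ ∀ j, t (π j) = t j ^ 2 := by
  simp [sqPermSolutions]

lemma card_sqPermSolutions_conj [Monoid G] (σ π : Equiv.Perm (Fin n)) :
    #(sqPermSolutions G (σ * π * σ⁻¹)) = #(sqPermSolutions G π) := by
  refine card_nbij' (· ∘ σ) (· ∘ ⇑σ⁻¹) (fun t ht => ?_) (fun t ht => ?_)
    (fun t _ => by ext; simp) (fun t _ => by ext; simp)
  · rw [mem_coe, mem_sqPermSolutions] at ht ⊢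
    refine ⟨fun h1 => ht.1 (funext fun k => by simpa using congrFun h1 (σ⁻¹ k)), fun j => ?_⟩
    simpa using ht.2 (σ j)
  · rw [mem_coe, mem_sqPermSolutions] at ht ⊢
    refine ⟨fun h1 => ht.1 (funext fun k => by simpa using congrFun h1 (σ k)), fun j => ?_⟩
    simpa using ht.2 (σ⁻¹ j)

lemma sqPermSolutions_one [RightCancelMonoid G] : sqPermSolutions G (1 : Equiv.Perm (Fin n)) = ∅ :=
  eq_empty_of_forall_notMem fun _ ht =>
    (mem_sqPermSolutions.mp ht).1 <|
      funext fun j => eq_one_of_sq_eq_self ((mem_sqPermSolutions.mp ht).2 j).symm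

variable [CancelMonoid G]

lemma card_sqPermSolutions_swap :
    #(sqPermSolutions G (Equiv.swap (0 : Fin 3) 1)) = #{a : G | orderOf a = 3} := by
  have : Fact (Nat.Prime 3) := ⟨Nat.prime_three⟩
  refine card_nbij' (· 0) (fun a => ![a, a ^ 2, 1]) (fun t ht => ?_) (fun a ha => ?_)
    (fun t ht => ?_) (fun a _ => rfl)
  · obtain ⟨ht1, h⟩ := mem_sqPermSolutions.mp ht
    have h0 : t 1 = t 0 ^ 2 := h 0
    have h1 : t 0 = t 1 ^ 2 := h 1
    have h2 : t 2 = 1 := eq_one_of_sq_eq_self (h 2).symm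
    simp only [coe_filter, mem_univ, true_and, Set.mem_ofPred_eq]
    refine orderOf_eq_prime (pow_eq_one_of_pow_succ_eq_self ?_) fun h0' => ht1 ?_
    · calc t 0 ^ (3 + 1) = (t 0 ^ 2) ^ 2 := by rw [← pow_mul]
        _ = t 0 := by rw [← h0, ← h1]
    · ext j; fin_cases j <;> simp [h0, h0', h2]
  · simp only [coe_filter, mem_univ, true_and, Set.mem_ofPred_eq] at ha
    rw [mem_coe, mem_sqPermSolutions]
    refine ⟨fun h => ?_, fun j => ?_⟩
    · have ha1 : a = 1 := by simpa using congrFun h 0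
      simp [ha1] at ha
    fin_cases j <;> simp [Equiv.swap_apply_of_ne_of_ne, ← pow_mul]
    rw [← pow_mod_orderOf, ha, pow_one]
  · obtain ⟨-, h⟩ := mem_sqPermSolutions.mp ht
    have h0 : t 1 = t 0 ^ 2 := h 0
    have h2 : t 2 = 1 := eq_one_of_sq_eq_self (h 2).symm
    ext j; fin_cases j <;> simp [h0, h2]

lemma card_sqPermSolutions_finRotate :
    #(sqPermSolutions G (finRotate 3)) = #{a : G | orderOf a = 7} := by
  have : Fact (Nat.Prime 7) := ⟨by norm_num⟩
  refine card_nbij' (· 0) (fun a => ![a, a ^ 2, a ^ 4]) (fun t ht => ?_) (fun a ha => ?_)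
    (fun t ht => ?_) (fun a _ => rfl)
  · obtain ⟨ht1, h⟩ := mem_sqPermSolutions.mp ht
    have h0 : t 1 = t 0 ^ 2 := h 0
    have h1 : t 2 = t 1 ^ 2 := h 1
    have h2 : t 0 = t 2 ^ 2 := h 2
    simp only [coe_filter, mem_univ, true_and, Set.mem_ofPred_eq]
    refine orderOf_eq_prime (pow_eq_one_of_pow_succ_eq_self ?_) fun h0' => ht1 ?_
    · calc t 0 ^ (7 + 1) = ((t 0 ^ 2) ^ 2) ^ 2 := by rw [← pow_mul, ← pow_mul]
        _ = t 0 := by rw [← h0, ← h1, ← h2]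
    · ext j; fin_cases j <;> simp [h0, h1, h0']
  · simp only [coe_filter, mem_univ, true_and, Set.mem_ofPred_eq] at ha
    rw [mem_coe, mem_sqPermSolutions]
    refine ⟨fun h => ?_, fun j => ?_⟩
    · have ha1 : a = 1 := by simpa using congrFun h 0
      simp [ha1] at ha
    fin_cases j <;> simp [← pow_mul]
    rw [← pow_mod_orderOf, ha, pow_one]
  · obtain ⟨-, h⟩ := mem_sqPermSolutions.mp ht
    have h0 : t 1 = t 0 ^ 2 := h 0
    have h1 : t 2 = t 1 ^ 2 := h 1
    ext j; fin_cases j <;> simp [h0, h1, ← pow_mul]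

end SqPermSolutions

lemma sum_perm_fin_three {M : Type*} [AddCommMonoid M] (f : Equiv.Perm (Fin 3) → M)
    (hf : ∀ σ π, f (σ * π * σ⁻¹) = f π) :
    ∑ π, f π = f 1 + 3 • f (Equiv.swap 0 1) + 2 • f (finRotate 3) := by
  have huniv : (univ : Finset (Equiv.Perm (Fin 3))) =
      {1, Equiv.swap 0 1, Equiv.swap 0 2, Equiv.swap 1 2, finRotate 3, (finRotate 3)⁻¹} := by
    decide
  have h02 : f (Equiv.swap 0 2) = f (Equiv.swap 0 1) := by
    rw [← hf (Equiv.swap 1 2)]; congr 1; decide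
  have h12 : f (Equiv.swap 1 2) = f (Equiv.swap 0 1) := by
    rw [← hf (Equiv.swap 0 2)]; congr 1; decide
  have hinv : f (finRotate 3)⁻¹ = f (finRotate 3) := by
    rw [← hf (Equiv.swap 0 1)]; congr 1; decide
  rw [huniv, sum_insert (by decide), sum_insert (by decide), sum_insert (by decide),
    sum_insert (by decide), sum_insert (by decide), sum_singleton, h02, h12, hinv]
  abel

lemma card_GL_supported_on_perm {ι K : Type*} [Fintype ι] [DecidableEq ι] [Field K]
    (π : Equiv.Perm ι) :
    Nat.card {A : GL ι K // ∀ i j, i ≠ π j → (A : Matrix ι ι K) i j = 0} = Nat.card (ι → Kˣ) := by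
  let monomial (u : ι → Kˣ) : Matrix ι ι K := (diagonal fun j => (u j : K)).submatrix π.symm id
  have monomial_apply (u : ι → Kˣ) (i j : ι) :
      monomial u i j = if i = π j then (u j : K) else 0 := by
    by_cases h : i = π j <;> simp [monomial, h, Equiv.symm_apply_eq]
  have det_monomial (u : ι → Kˣ) : (monomial u).det ≠ 0 := by
    rw [det_permute, det_diagonal]
    exact mul_ne_zero ((Units.isUnit _).map (Int.castRingHom K)).ne_zero
      (prod_ne_zero_iff.mpr fun j _ => (u j).ne_zero)
  have diag_ne_zero (A : {A : GL ι K // ∀ i j, i ≠ π j → (A : Matrix ι ι K) i j = 0}) (j : ι) :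
      (A.1 : Matrix ι ι K) (π j) j ≠ 0 := fun h0 =>
    A.1.det_ne_zero <| det_eq_zero_of_column_eq_zero j fun i => by
      by_cases hi : i = π j
      · rwa [hi]
      · exact A.2 i j hi
  refine Nat.card_congr
    { toFun := fun A j => Units.mk0 _ (diag_ne_zero A j)
      invFun := fun u => ⟨GeneralLinearGroup.mkOfDetNeZero _ (det_monomial u), fun i j h => by
        simp [GeneralLinearGroup.mkOfDetNeZero, monomial_apply, h]⟩
      left_inv := fun A => ?_
      right_inv := fun u => ?_ }
  · ext i j
    by_cases h : i = π j
    · simp [GeneralLinearGroup.mkOfDetNeZero, monomial_apply, h]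
    · simp [GeneralLinearGroup.mkOfDetNeZero, monomial_apply, h, A.2 i j h]
  · ext j
    simp [GeneralLinearGroup.mkOfDetNeZero, monomial_apply]

section FixSet

variable {F : Type*} [Field F] {n : ℕ} {t : Fin n → Fˣ}

lemma mem_fixSet_one_iff {A : GL (Fin n) F} :
    A ∈ fixSet F n 1 t ↔ ∀ i j, t i ≠ t j ^ 2 → (A : Matrix (Fin n) (Fin n) F) i j = 0 := by
  refine forall₂_congr fun i j => ?_
  rw [Equiv.Perm.coe_one, id_eq, id_eq, mul_comm (t i : F), mul_eq_mul_left_iff,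
    ← Units.val_pow_eq_pow_val, Units.val_inj, or_iff_not_imp_left]

lemma fixSet_one_one : fixSet F n 1 1 = Set.univ := by
  ext A
  simp [fixSet]

lemma exists_perm_of_mem_fixSet_one {A : GL (Fin n) F} (hA : A ∈ fixSet F n 1 t) :
    ∃ π : Equiv.Perm (Fin n), ∀ j, t (π j) = t j ^ 2 := by
  have hdet := A.det_ne_zero
  rw [det_apply] at hdet
  obtain ⟨π, -, hπ⟩ := exists_ne_zero_of_sum_ne_zero hdet
  refine ⟨π, fun j => ?_⟩
  by_contra hne
  exact hπ (smul_eq_zero_of_right _ (prod_eq_zero (mem_univ j) (mem_fixSet_one_iff.mp hA _ _ hne)))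

lemma card_fixSet_one_of_injective (ht : Function.Injective t) {π : Equiv.Perm (Fin n)}
    (hπ : ∀ j, t (π j) = t j ^ 2) :
    Nat.card (fixSet F n 1 t) = Nat.card (Fin n → Fˣ) := by
  have : fixSet F n 1 t =
      {A : GL (Fin n) F | ∀ i j, i ≠ π j → (A : Matrix (Fin n) (Fin n) F) i j = 0} := by
    ext A
    simp only [mem_fixSet_one_iff, ← hπ, ht.ne_iff]
    rfl
  rw [this]
  exact card_GL_supported_on_perm π

lemma card_fixSet_three_one_of_ne_one [DecidableEq F] {t : Fin 3 → Fˣ} (ht : t ≠ 1) :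
    Nat.card (fixSet F 3 1 t)
      = Nat.card (Fin 3 → Fˣ) * #{π : Equiv.Perm (Fin 3) | ∀ j, t (π j) = t j ^ 2} := by
  by_cases hπ : ∃ π : Equiv.Perm (Fin 3), ∀ j, t (π j) = t j ^ 2
  · obtain ⟨π, hπ⟩ := hπ
    have hinj := injective_of_apply_perm_eq_sq hπ ht
    have hunique : #{π : Equiv.Perm (Fin 3) | ∀ j, t (π j) = t j ^ 2} = 1 := by
      refine card_eq_one.mpr
        ⟨π, eq_singleton_iff_unique_mem.mpr ⟨by simpa using hπ, fun π' h' => ?_⟩⟩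
      simp only [mem_filter, mem_univ, true_and] at h'
      exact Equiv.ext fun j => hinj ((h' j).trans (hπ j).symm)
    rw [card_fixSet_one_of_injective hinj hπ, hunique, mul_one]
  · have : fixSet F 3 1 t = ∅ :=
      Set.eq_empty_of_forall_notMem fun A hA => hπ (exists_perm_of_mem_fixSet_one hA)
    push Not at hπ
    simp [this, hπ]

end FixSet

/-- For `n = 3` and `σ` the identity permutation, the total number of fixed points is
`(q³−1)(q³−q)(q³−q²) + 6·P₃·(q−1)³ + 12·P₇·(q−1)³`. -/
theorem sum_card_fixSet_three_id {F : Type*} [Field F] [Fintype F] [DecidableEq F]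
    (q : ℕ) (hcard : Fintype.card F = q) :
    ∑ t : Fin 3 → Fˣ, Nat.card ↥(fixSet F 3 1 t)
      = (q ^ 3 - 1) * (q ^ 3 - q) * (q ^ 3 - q ^ 2)
        + 6 * (if 3 ∣ (q - 1) then 1 else 0) * (q - 1) ^ 3
        + 12 * (if 7 ∣ (q - 1) then 1 else 0) * (q - 1) ^ 3 := by
  have : Fact (Nat.Prime 3) := ⟨Nat.prime_three⟩
  have : Fact (Nat.Prime 7) := ⟨by norm_num⟩
  have hunits : Fintype.card Fˣ = q - 1 := by rw [Fintype.card_units, hcard]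
  have hGL : Nat.card (GL (Fin 3) F) = (q ^ 3 - 1) * (q ^ 3 - q) * (q ^ 3 - q ^ 2) := by
    rw [card_GL_field, hcard, Fin.prod_univ_three]; norm_num
  have hswap : ∑ t ∈ univ.erase (1 : Fin 3 → Fˣ), #{π : Equiv.Perm (Fin 3) | ∀ j, t (π j) = t j ^ 2}
      = ∑ π : Equiv.Perm (Fin 3), #(sqPermSolutions Fˣ π) := by
    simpa only [bipartiteAbove, bipartiteBelow, sqPermSolutions, ← filter_ne', filter_filter] using
      sum_card_bipartiteAbove_eq_sum_card_bipartiteBelow (s := univ.erase 1) (t := univ)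
        (r := fun (t : Fin 3 → Fˣ) (π : Equiv.Perm (Fin 3)) => ∀ j, t (π j) = t j ^ 2)
  rw [← add_sum_erase _ _ (mem_univ 1), fixSet_one_one, Nat.card_univ, hGL,
    sum_congr rfl fun t ht => card_fixSet_three_one_of_ne_one (ne_of_mem_erase ht), ← mul_sum,
    hswap, sum_perm_fin_three _ card_sqPermSolutions_conj, sqPermSolutions_one,
    card_sqPermSolutions_swap, card_sqPermSolutions_finRotate, card_orderOf_eq_prime,
    card_orderOf_eq_prime, hunits, Nat.card_eq_fintype_card, Fintype.card_fun, hunits]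
  split_ifs <;> simp <;> ring
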